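/- arXiv:0805.3743 — 2 statements merged into one kernel-verified Lean document; each statement's English description precedes it below -/
import Mathlib

section
/- For all nonnegative integers n, the following identity of rational numbers holds: \sum_{p=0}^{\lfloor n/4 \rfloor} (1/(5p+1)) \binom{5p+1}{p} \binom{n+p}{n-4p} = \sum_{p=0}^{\lfloor n/2 \rfloor} (-1)^p (1/(n+1)) \binom{n+p}{p} \binom{2n-2p}{n-2p}. -/
/-!
Both sides are `1/(n+1)` times the coefficient of `X^n` in a product of negative binomial series.
The Fuss–Catalan factor rewrites as
`1/(5p+1) C(5p+1,p) C(n+p,n-4p) = 1/(n+1) C(n+p,p) C(n+1,n-4p)`, which makes the left side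
`1/(n+1) [X^n] (1+X)^(n+1) (1-X^4)^(-(n+1))`, while the right side is
`1/(n+1) [X^n] (1-X)^(-(n+1)) (1+X^2)^(-(n+1))`.
These series agree because `1 - X^4 = (1+X)(1-X)(1+X^2)`.
-/

open PowerSeries Finset

namespace PowerSeries

variable {R : Type*} [CommRing R]

theorem coeff_one_add_X_pow (m k : ℕ) : coeff k ((1 + X : R⟦X⟧) ^ m) = m.choose k := by
  rw [show (1 + X : R⟦X⟧) ^ m = ((1 + Polynomial.X) ^ m : Polynomial R) by simp,
    Polynomial.coeff_coe, Polynomial.coeff_one_add_X_pow]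

theorem coeff_invOneSubPow_succ (n k : ℕ) :
    coeff k (invOneSubPow R (n + 1) : R⟦X⟧) = (n + k).choose k := by
  rw [invOneSubPow_val_succ_eq_mk_add_choose, coeff_mk, Nat.choose_symm_add]

theorem coeff_expand_mul_eq_sum_range (d : ℕ) (hd : d ≠ 0) (f g : R⟦X⟧) (n : ℕ) :
    coeff n (expand d hd f * g) =
      ∑ p ∈ range (n / d + 1), coeff p f * coeff (n - d * p) g := by
  have hd' : 0 < d := Nat.pos_of_ne_zero hd
  rw [coeff_mul, Nat.sum_antidiagonal_eq_sum_range_succ_mk]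
  simp_rw [coeff_expand, ite_mul, zero_mul]
  rw [← sum_filter]
  refine sum_nbij' (· / d) (d * ·) (fun i hi ↦ ?_) (fun p hp ↦ ?_) (fun i hi ↦ ?_)
    (fun p _ ↦ Nat.mul_div_cancel_left p hd') (fun i hi ↦ ?_)
  · simp only [mem_filter, mem_range] at hi ⊢
    exact Nat.lt_succ_of_le (Nat.div_le_div_right (Nat.le_of_lt_succ hi.1))
  · simp only [mem_filter, mem_range] at hp ⊢
    exact ⟨by nlinarith [Nat.mul_div_le n d, Nat.lt_succ_iff.mp hp], dvd_mul_right d p⟩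
  · simp only [mem_filter, mem_range] at hi
    exact Nat.mul_div_cancel' hi.2
  · rw [Nat.mul_div_cancel' (mem_filter.mp hi).2]

theorem expand_rescale_invOneSubPow_mul (d : ℕ) (hd : d ≠ 0) (c : R) (n : ℕ) :
    expand d hd (rescale c (invOneSubPow R n : R⟦X⟧)) * (1 - C c * X ^ d) ^ n = 1 := by
  have h := congrArg (fun f ↦ expand d hd (rescale c f)) (invOneSubPow R n).val_inv
  rw [invOneSubPow_inv_eq_one_sub_pow] at h
  simpa only [map_mul, map_pow, map_sub, map_one, rescale_X, expand_C, expand_X] using h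

theorem expand_invOneSubPow_mul_one_add_X_pow (n : ℕ) :
    expand 4 four_ne_zero (invOneSubPow R n : R⟦X⟧) * (1 + X) ^ n =
      expand 2 two_ne_zero (rescale (-1) (invOneSubPow R n : R⟦X⟧)) *
        (invOneSubPow R n : R⟦X⟧) := by
  have h4 := expand_rescale_invOneSubPow_mul 4 four_ne_zero (1 : R) n
  have h2 := expand_rescale_invOneSubPow_mul 2 two_ne_zero (-1 : R) n
  rw [rescale_one, RingHom.id_apply, map_one, one_mul] at h4
  rw [map_neg, map_one, neg_one_mul, sub_neg_eq_add] at h2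
  have hI : (1 - X) ^ n * (invOneSubPow R n : R⟦X⟧) = 1 := by
    rw [← invOneSubPow_inv_eq_one_sub_pow]
    exact (invOneSubPow R n).inv_val
  have hfactor : ((1 + X) * ((1 - X) * (1 + X ^ 2)) : R⟦X⟧) = 1 - X ^ 4 := by ring
  refine left_inv_eq_right_inv (a := ((1 - X) * (1 + X ^ 2)) ^ n) ?_ ?_
  · rw [mul_assoc, ← mul_pow, hfactor, h4]
  · rw [mul_pow]
    linear_combination (expand 2 two_ne_zero (rescale (-1) (invOneSubPow R n : R⟦X⟧)) *
      (1 + X ^ 2) ^ n) * hI + h2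

end PowerSeries

theorem one_div_mul_choose_mul_choose_eq (r p n : ℕ) (h : r * p ≤ n) :
    (1 : ℚ) / (r * p + p + 1) * ((r * p + p + 1).choose p) * ((n + p).choose (n - r * p)) =
      1 / (n + 1) * ((n + p).choose p * (n + 1).choose (n - r * p)) := by
  rw [Nat.cast_choose ℚ (show p ≤ r * p + p + 1 by omega),
    Nat.cast_choose ℚ (show n - r * p ≤ n + p by omega),
    Nat.cast_choose ℚ (show p ≤ n + p by omega),
    Nat.cast_choose ℚ (show n - r * p ≤ n + 1 by omega),
    show r * p + p + 1 - p = r * p + 1 by omega, show n + p - (n - r * p) = r * p + p by omega,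
    Nat.add_sub_cancel, show n + 1 - (n - r * p) = r * p + 1 by omega,
    Nat.factorial_succ (r * p + p), Nat.factorial_succ n]
  push_cast
  field_simp

/-- **Sun's identity for generalized Catalan numbers `C_{1,5}`** (Formula (2)).
For all nonnegative integers `n`,
`∑_{p=0}^{⌊n/4⌋} (1/(5p+1)) C(5p+1, p) C(n+p, n-4p)
  = ∑_{p=0}^{⌊n/2⌋} (-1)^p (1/(n+1)) C(n+p, p) C(2n-2p, n-2p)`. -/
theorem sun_identity (n : ℕ) :
    ∑ p ∈ Finset.range (n / 4 + 1),
        (1 : ℚ) / (5 * p + 1) * ((5 * p + 1).choose p) * ((n + p).choose (n - 4 * p)) =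
      ∑ p ∈ Finset.range (n / 2 + 1),
        (-1 : ℚ) ^ p * (1 / (n + 1)) * ((n + p).choose p) * ((2 * n - 2 * p).choose (n - 2 * p)) := by
  have key := congrArg (coeff n) (expand_invOneSubPow_mul_one_add_X_pow (R := ℚ) (n + 1))
  simp only [coeff_expand_mul_eq_sum_range, coeff_rescale, coeff_invOneSubPow_succ,
    coeff_one_add_X_pow] at key
  calc _ = 1 / (n + 1) * ∑ p ∈ range (n / 4 + 1),
          ((n + p).choose p : ℚ) * (n + 1).choose (n - 4 * p) := by
        rw [mul_sum]
        refine sum_congr rfl fun p hp ↦ ?_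
        convert one_div_mul_choose_mul_choose_eq 4 p n (by grind) using 5 <;> push_cast <;> ring
    _ = 1 / (n + 1) * ∑ p ∈ range (n / 2 + 1),
          (-1 : ℚ) ^ p * (n + p).choose p * (2 * n - 2 * p).choose (n - 2 * p) := by
        rw [key]
        refine congrArg _ (sum_congr rfl fun p hp ↦ ?_)
        rw [show n + (n - 2 * p) = 2 * n - 2 * p by grind]
    _ = _ := by
        rw [mul_sum]
        exact sum_congr rfl fun p _ ↦ by ring
end

section
/- For every nonnegative integer n, the number of proper colored binary trees with n internal vertices equals \sum_{p=0}^{\lfloor n/2 \rfloor} (-1)^p (1/(n+1)) \binom{n+p}{p} \binom{2n-2p}{n-2p}. -/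
/-- A complete binary tree: every internal vertex has exactly a left and a right child. -/
inductive BinTree : Type
  | leaf : BinTree
  | node : BinTree → BinTree → BinTree

namespace BinTree

/-- The number of internal vertices of a complete binary tree. -/
def internals : BinTree → ℕ
  | leaf => 0
  | node l r => internals l + internals r + 1

/-- The subtree rooted at the vertex reached from the root by the given path,
where `false` means "go to the left child" and `true` means "go to the right child";
`none` if there is no such vertex. -/
def subtreeAt : BinTree → List Bool → Option BinTree
  | t, [] => some t
  | leaf, _ :: _ => none
  | node l _, false :: p => subtreeAt l p
  | node _ r, true :: p => subtreeAt r p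

/-- The list of (the paths from the root to) all vertices of a complete binary tree. -/
def vertices : BinTree → List (List Bool)
  | leaf => [[]]
  | node l r =>
      [] :: ((vertices l).map (List.cons false) ++ (vertices r).map (List.cons true))

/-- The length of the maximal L-path starting at the root, i.e. the length of the
leftmost path of the tree. -/
def leftLen : BinTree → ℕ
  | leaf => 0
  | node l _ => leftLen l + 1

/-- `p` is (the path from the root to) an *initial vertex* of `t`: it is a vertex of `t`
which is not the left child of its father (it is the root or a right child), so it is the
starting vertex of a maximal L-path. -/
def IsInitial (t : BinTree) (p : List Bool) : Prop :=
  (subtreeAt t p).isSome ∧ (p = [] ∨ p.getLast? = some true)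

/-- The length `l(v)` of the associated maximal L-path of the vertex `v` at path `p`
(junk value `0` if `p` is not a vertex of `t`). -/
def pathLen (t : BinTree) (p : List Bool) : ℕ :=
  match subtreeAt t p with
  | some s => leftLen s
  | none => 0

end BinTree

/-- A colored binary tree: a complete binary tree together with an assignment of a color
`c(v)` with `0 ≤ c(v) ≤ ⌊l(v)/2⌋` to each initial vertex `v` (vertices which are not
initial carry the junk color `0`). -/
structure ColoredBinTree : Type where
  /-- the underlying complete binary tree -/
  tree : BinTree
  /-- the color of each vertex (indexed by the path from the root) -/
  color : List Bool → ℕ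
  color_le : ∀ p, BinTree.IsInitial tree p → color p ≤ BinTree.pathLen tree p / 2
  color_eq_zero : ∀ p, ¬ BinTree.IsInitial tree p → color p = 0

namespace ColoredBinTree

/-- The color number of a colored binary tree: the sum of the colors of its
initial vertices. -/
def colorNum (B : ColoredBinTree) : ℕ :=
  ((B.tree.vertices).map B.color).sum

/-- The initial vertex at path `p` is *proper*: its color is `2k` and the length of its
associated maximal L-path is `4k` or `4k+1` for some nonnegative integer `k`. -/
def ProperAt (B : ColoredBinTree) (p : List Bool) : Prop :=
  ∃ k : ℕ, B.color p = 2 * k ∧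
    (BinTree.pathLen B.tree p = 4 * k ∨ BinTree.pathLen B.tree p = 4 * k + 1)

/-- A colored binary tree is *proper* if all its initial vertices are proper. -/
def Proper (B : ColoredBinTree) : Prop :=
  ∀ p, BinTree.IsInitial B.tree p → B.ProperAt p

end ColoredBinTree

/-!
Every tree admits at most one proper coloring, namely the one giving the initial vertex `v` the
color `2 ⌊l(v)/4⌋`, and it admits one iff all its maximal L-paths have length `≡ 0, 1 (mod 4)`.
Decomposing such trees at the root, keeping track of the length mod 4 of the L-path through the
root, shows that `h = X G`, with `G` the generating function of these trees, satisfies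
`h (1 - h) (1 + h²) = X`. Lagrange inversion then gives
`[Xⁿ] G = [Xⁿ⁺¹] h = 1/(n+1) [Xⁿ] ((1 - X)(1 + X²))^{-(n+1)}`, and the coefficient is read off
from the binomial series of `(1 - X)^{-(n+1)}` and of `(1 + X²)^{-(n+1)}`.
-/

namespace PowerSeries

section CommRing

variable {R : Type*} [CommRing R]

/-- A right inverse for composition is a left inverse (`subst a f` is `f ∘ a`). -/
theorem subst_eq_X_of_subst_eq_X {φ ψ : R⟦X⟧}
    (hφ : constantCoeff φ = 0) (hφ₁ : IsUnit (coeff 1 φ)) (hψ : constantCoeff ψ = 0)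
    (h : subst ψ φ = X) : subst φ ψ = X := by
  have hφs : HasSubst φ := .of_constantCoeff_zero' hφ
  have hψs : HasSubst ψ := .of_constantCoeff_zero' hψ
  set χ := φ.substInvOfIsUnit hφ₁
  have hχ : subst φ χ = X := subst_substInvOfIsUnit_left φ hφ hφ₁
  suffices ψ = χ by rw [this, hχ]
  calc ψ = subst ψ (X : R⟦X⟧) := (subst_X hψs).symm
    _ = subst ψ (subst φ χ) := by rw [hχ]
    _ = subst (subst ψ φ) χ := subst_comp_subst_apply hφs hψs χ
    _ = χ := by rw [h, X_subst]

theorem coeff_subst_mul {φ : R⟦X⟧} (hφ : constantCoeff φ = 0)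
    (f g : R⟦X⟧) (n : ℕ) :
    coeff n (subst φ f * g) = ∑ k ∈ Finset.range (n + 1), coeff k f * coeff n (φ ^ k * g) := by
  have hφs : HasSubst φ := .of_constantCoeff_zero' hφ
  obtain ⟨r, hr⟩ : X ^ (n + 1) ∣ f - (trunc (n + 1) f : R⟦X⟧) :=
    X_pow_dvd_iff.2 fun m hm => by simp [coeff_trunc, hm]
  obtain ⟨ψ, hψ⟩ : X ^ (n + 1) ∣ φ ^ (n + 1) := pow_dvd_pow_of_dvd (X_dvd_iff.2 hφ) _
  have hf : subst φ f = Polynomial.aeval φ (trunc (n + 1) f) + φ ^ (n + 1) * subst φ r := by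
    calc subst φ f = subst φ ((trunc (n + 1) f : R⟦X⟧) + X ^ (n + 1) * r) := by
          rw [← hr, add_sub_cancel]
      _ = _ := by rw [subst_add hφs, subst_mul hφs, subst_pow hφs, subst_X hφs, subst_coe hφs]
  rw [hf, add_mul, map_add, hψ, mul_assoc, mul_assoc, coeff_X_pow_mul', if_neg (by omega),
    add_zero, Polynomial.aeval_eq_sum_range' (natDegree_trunc_lt f n), Finset.sum_mul, map_sum]
  refine Finset.sum_congr rfl fun k hk => ?_
  rw [coeff_trunc, if_pos (Finset.mem_range.1 hk), smul_mul_assoc, map_smul, smul_eq_mul]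

theorem coeff_mul_expand_two (f g : R⟦X⟧) (n : ℕ) :
    coeff n (f * expand 2 two_ne_zero g) =
      ∑ p ∈ Finset.range (n / 2 + 1), coeff (n - 2 * p) f * coeff p g := by
  rw [mul_comm, coeff_mul, Finset.Nat.sum_antidiagonal_eq_sum_range_succ_mk]
  simp only [coeff_expand, ite_mul, zero_mul]
  rw [← Finset.sum_filter]
  refine (Finset.sum_nbij' (fun p => 2 * p) (fun k => k / 2) ?_ ?_ ?_ ?_ ?_).symm <;>
    simp only [Finset.mem_filter, Finset.mem_range]
  · exact fun a ha => ⟨by omega, dvd_mul_right 2 a⟩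
  · exact fun a ha => by omega
  · exact fun a _ => by omega
  · exact fun a ha => Nat.mul_div_cancel' ha.2
  · exact fun a _ => by rw [Nat.mul_div_cancel_left a two_pos, mul_comm]

end CommRing

section Field

variable {K : Type*} [Field K]

theorem inv_one_sub_X_mul_one_add_X_sq_pow (n : ℕ) :
    ((1 - X) * (1 + X ^ 2) : K⟦X⟧)⁻¹ ^ (n + 1) =
    (mk fun j => (n + j).choose n : K⟦X⟧) *
      expand 2 two_ne_zero (rescale (-1) (mk fun j => (n + j).choose n : K⟦X⟧)) := by
  set A : K⟦X⟧ := mk fun j => (n + j).choose n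
  have hA : A * (1 - X) ^ (n + 1) = 1 := mk_add_choose_mul_one_sub_pow_eq_one K n
  have hB : expand 2 two_ne_zero (rescale (-1) A) * (1 + X ^ 2 : K⟦X⟧) ^ (n + 1) = 1 := by
    simpa [rescale_X, expand_X, sub_eq_add_neg] using
      congrArg (expand 2 two_ne_zero ∘ rescale (-1 : K)) hA
  have hu : ((1 - X) * (1 + X ^ 2) : K⟦X⟧) * ((1 - X) * (1 + X ^ 2))⁻¹ = 1 :=
    PowerSeries.mul_inv_cancel _ (by simp)
  generalize ((1 - X) * (1 + X ^ 2) : K⟦X⟧)⁻¹ = w at hu ⊢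
  calc w ^ (n + 1) = w ^ (n + 1) * ((A * (1 - X) ^ (n + 1)) *
        (expand 2 two_ne_zero (rescale (-1) A) * (1 + X ^ 2) ^ (n + 1))) := by rw [hA, hB]; ring
    _ = ((1 - X) * (1 + X ^ 2) * w) ^ (n + 1) * (A * expand 2 two_ne_zero (rescale (-1) A)) := by
      rw [mul_pow, mul_pow]; ring
    _ = _ := by rw [hu, one_pow, one_mul]

theorem coeff_inv_one_sub_X_mul_one_add_X_sq_pow (n : ℕ) :
    coeff n (((1 - X) * (1 + X ^ 2) : K⟦X⟧)⁻¹ ^ (n + 1)) =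
      ∑ p ∈ Finset.range (n / 2 + 1),
        (-1) ^ p * ((n + p).choose p : K) * ((2 * n - 2 * p).choose (n - 2 * p) : K) := by
  rw [inv_one_sub_X_mul_one_add_X_sq_pow, coeff_mul_expand_two]
  refine Finset.sum_congr rfl fun p hp => ?_
  have hp : 2 * p ≤ n := by have := Finset.mem_range.1 hp; omega
  rw [coeff_mk, coeff_rescale, coeff_mk, Nat.choose_symm_add, Nat.choose_symm_add,
    show n + (n - 2 * p) = 2 * n - 2 * p by omega]
  ring

theorem coeff_derivative_X_mul_mul_inv_pow [CharZero K] {u : K⟦X⟧} (hu : constantCoeff u ≠ 0)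
    (m : ℕ) :
    coeff m (d⁄dX K (X * u) * u⁻¹ ^ (m + 1)) = if m = 0 then 1 else 0 := by
  have hu' : u * u⁻¹ = 1 := PowerSeries.mul_inv_cancel u hu
  have hderiv : d⁄dX K (X * u) = u + X * d⁄dX K u := by
    rw [Derivation.leibniz, derivative_X, smul_eq_mul, smul_eq_mul]; ring
  rcases m with _ | k
  · simp [hderiv, coeff_zero_eq_constantCoeff, hu]
  -- `(X u)' u⁻ᵏ⁻² = u⁻ᵏ⁻¹ - X (u⁻ᵏ⁻¹)' / (k + 1)`, whose coefficient of `X^(k+1)` vanishes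
  have key : C ((k : K) + 1) * (d⁄dX K (X * u) * u⁻¹ ^ (k + 2)) =
      C ((k : K) + 1) * u⁻¹ ^ (k + 1) - X * d⁄dX K (u⁻¹ ^ (k + 1)) := by
    rw [hderiv, derivative_pow, derivative_inv']
    simp only [map_add, map_natCast, map_one, Nat.cast_add, Nat.cast_one, add_tsub_cancel_right]
    linear_combination (↑k + 1) * u⁻¹ ^ (k + 1) * hu'
  have := congrArg (coeff (k + 1)) key
  rw [coeff_C_mul, map_sub, coeff_C_mul, coeff_succ_X_mul, coeff_derivative,
    mul_comm _ ((k : K) + 1), sub_self] at this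
  simpa [Nat.cast_add_one_ne_zero] using this

/-- Lagrange inversion. -/
theorem coeff_succ_of_subst_X_mul_eq_X [CharZero K] {u ψ : K⟦X⟧} (hu : constantCoeff u ≠ 0)
    (hψ : constantCoeff ψ = 0) (h : subst ψ (X * u) = X) (n : ℕ) :
    (n + 1 : K) * coeff (n + 1) ψ = coeff n (u⁻¹ ^ (n + 1)) := by
  set φ : K⟦X⟧ := X * u
  have hu' : u * u⁻¹ = 1 := PowerSeries.mul_inv_cancel u hu
  have hφ : constantCoeff φ = 0 := by simp [φ]
  have hinv : subst φ ψ = X :=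
    subst_eq_X_of_subst_eq_X hφ (by simpa [φ, coeff_succ_X_mul] using hu) hψ h
  have hchain : subst φ (d⁄dX K ψ) * d⁄dX K φ = 1 := by
    simpa [hinv] using (derivative_subst (.of_constantCoeff_zero' hφ) (f := ψ)).symm
  have hterm : ∀ k ∈ Finset.range (n + 1),
      coeff n (φ ^ k * (d⁄dX K φ * u⁻¹ ^ (n + 1))) = if n = k then 1 else 0 := by
    intro k hk
    obtain ⟨j, rfl⟩ := Nat.exists_eq_add_of_le (Finset.mem_range_succ_iff.1 hk)
    have : φ ^ k * (d⁄dX K φ * u⁻¹ ^ (k + j + 1)) = X ^ k * (d⁄dX K φ * u⁻¹ ^ (j + 1)) := by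
      rw [show k + j + 1 = k + (j + 1) by ring, pow_add, mul_pow]
      linear_combination (X ^ k * (d⁄dX K φ * u⁻¹ ^ (j + 1))) * congrArg (· ^ k) hu'
    rw [this, coeff_X_pow_mul', if_pos (by omega), Nat.add_sub_cancel_left,
      coeff_derivative_X_mul_mul_inv_pow hu]
    simp
  calc (n + 1 : K) * coeff (n + 1) ψ = coeff n (d⁄dX K ψ) := by rw [coeff_derivative, mul_comm]
    _ = coeff n (subst φ (d⁄dX K ψ) * (d⁄dX K φ * u⁻¹ ^ (n + 1))) := by
      rw [coeff_subst_mul hφ, Finset.sum_congr rfl fun k hk => by rw [hterm k hk],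
        Finset.sum_mul_boole, if_pos (Finset.self_mem_range_succ n)]
    _ = coeff n (u⁻¹ ^ (n + 1)) := by rw [← mul_assoc, hchain, one_mul]

end Field

end PowerSeries

namespace BinTree

@[simp] theorem subtreeAt_nil (t : BinTree) : t.subtreeAt [] = some t := by cases t <;> rfl

@[simp] theorem subtreeAt_leaf_cons (b : Bool) (p : List Bool) :
    leaf.subtreeAt (b :: p) = none := by
  cases b <;> rfl

@[simp] theorem subtreeAt_node_false (l r : BinTree) (p : List Bool) :
    (node l r).subtreeAt (false :: p) = l.subtreeAt p := rfl

@[simp] theorem subtreeAt_node_true (l r : BinTree) (p : List Bool) :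
    (node l r).subtreeAt (true :: p) = r.subtreeAt p := rfl

@[simp] theorem pathLen_nil (t : BinTree) : t.pathLen [] = t.leftLen := by cases t <;> rfl

@[simp] theorem pathLen_node_false (l r : BinTree) (p : List Bool) :
    (node l r).pathLen (false :: p) = l.pathLen p := rfl

@[simp] theorem pathLen_node_true (l r : BinTree) (p : List Bool) :
    (node l r).pathLen (true :: p) = r.pathLen p := rfl

theorem isInitial_nil (t : BinTree) : t.IsInitial [] := ⟨by simp, .inl rfl⟩

theorem isInitial_leaf_iff {p : List Bool} : leaf.IsInitial p ↔ p = [] := by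
  rcases p with _ | ⟨b, p⟩ <;> simp [IsInitial]

theorem isInitial_node_false_iff {l r : BinTree} {p : List Bool} :
    (node l r).IsInitial (false :: p) ↔ p ≠ [] ∧ l.IsInitial p := by
  rcases p with _ | ⟨b, p⟩ <;> simp [IsInitial, List.getLast?_cons]

theorem isInitial_node_true_iff {l r : BinTree} {p : List Bool} :
    (node l r).IsInitial (true :: p) ↔ r.IsInitial p := by
  rcases p with _ | ⟨b, p⟩ <;> simp [IsInitial, List.getLast?_cons]

theorem forall_isInitial_iff {t : BinTree} {P : List Bool → Prop} :
    (∀ p, t.IsInitial p → P p) ↔ P [] ∧ ∀ p ≠ [], t.IsInitial p → P p := by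
  refine ⟨fun h => ⟨h [] (isInitial_nil t), fun p _ => h p⟩, fun ⟨hnil, h⟩ p hp => ?_⟩
  rcases eq_or_ne p [] with rfl | hne
  exacts [hnil, h p hne hp]

theorem forall_ne_nil_isInitial_node_iff {l r : BinTree} {P : List Bool → Prop} :
    (∀ p ≠ [], (node l r).IsInitial p → P p) ↔
      (∀ q ≠ [], l.IsInitial q → P (false :: q)) ∧ ∀ q, r.IsInitial q → P (true :: q) := by
  refine ⟨fun h => ⟨fun q hq hl => ?_, fun q hr => ?_⟩, ?_⟩
  · exact h _ (List.cons_ne_nil _ _) (isInitial_node_false_iff.2 ⟨hq, hl⟩)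
  · exact h _ (List.cons_ne_nil _ _) (isInitial_node_true_iff.2 hr)
  rintro ⟨hl, hr⟩ (_ | ⟨_ | _, q⟩) hp hi
  · exact absurd rfl hp
  · exact hl q (isInitial_node_false_iff.1 hi).1 (isInitial_node_false_iff.1 hi).2
  · exact hr q (isInitial_node_true_iff.1 hi)

/-- `IsProperShape s t`: every maximal L-path of `t` has length `≡ 0, 1 (mod 4)`, where the one
starting at the root of `t` is counted as continuing an L-path of length `s` above `t`. -/
def IsProperShape : ℕ → BinTree → Prop
  | s, leaf => s % 4 ≤ 1
  | s, node l r => IsProperShape (s + 1) l ∧ IsProperShape 0 r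

theorem isProperShape_iff {s : ℕ} {t : BinTree} :
    IsProperShape s t ↔
      (t.leftLen + s) % 4 ≤ 1 ∧ ∀ p ≠ [], t.IsInitial p → t.pathLen p % 4 ≤ 1 := by
  induction t generalizing s with
  | leaf => simp +contextual [IsProperShape, leftLen, isInitial_leaf_iff]
  | node l r ihl ihr =>
    simp only [IsProperShape, ihl, ihr, forall_ne_nil_isInitial_node_iff, pathLen_node_false,
      pathLen_node_true, leftLen, add_zero]
    rw [← pathLen_nil r, ← forall_isInitial_iff (P := fun q => r.pathLen q % 4 ≤ 1),
      show l.leftLen + 1 + s = l.leftLen + (s + 1) by ring]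
    tauto

theorem isProperShape_zero_iff {t : BinTree} :
    IsProperShape 0 t ↔ ∀ p, t.IsInitial p → t.pathLen p % 4 ≤ 1 := by
  rw [isProperShape_iff, forall_isInitial_iff, pathLen_nil, add_zero]

theorem isProperShape_add_four (s : ℕ) : IsProperShape (s + 4) = IsProperShape s := by
  funext t
  induction t generalizing s with
  | leaf => simp [IsProperShape]
  | node l r ihl _ => simp only [IsProperShape, add_right_comm s 4 1, ihl]

end BinTree

attribute [ext] ColoredBinTree

namespace ColoredBinTree

open Classical in
noncomputable def properColoring (t : BinTree) : ColoredBinTree where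
  tree := t
  color p := if t.IsInitial p then 2 * (t.pathLen p / 4) else 0
  color_le p hp := by rw [if_pos hp]; omega
  color_eq_zero p hp := if_neg hp

theorem proper_iff (B : ColoredBinTree) :
    B.Proper ↔ B.tree.IsProperShape 0 ∧ B = properColoring B.tree := by
  rw [BinTree.isProperShape_zero_iff]
  constructor
  · intro h
    refine ⟨fun p hp => ?_, ColoredBinTree.ext rfl (funext fun p => ?_)⟩
    · obtain ⟨k, -, hk | hk⟩ := h p hp <;> omega
    · by_cases hp : B.tree.IsInitial p
      · obtain ⟨k, hc, hk | hk⟩ := h p hp <;> simp only [properColoring, if_pos hp] <;> omega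
      · simp only [properColoring, if_neg hp, B.color_eq_zero p hp]
  · rintro ⟨h, hB⟩ p hp
    rw [hB]
    refine ⟨B.tree.pathLen p / 4, if_pos hp, ?_⟩
    have := h p hp
    dsimp only [properColoring]
    omega

theorem card_proper_eq (n : ℕ) :
    Nat.card {B : ColoredBinTree // B.tree.internals = n ∧ B.Proper} =
      Nat.card {t : BinTree // t.internals = n ∧ t.IsProperShape 0} :=
  Nat.card_congr
    { toFun B := ⟨B.1.tree, B.2.1, ((proper_iff B.1).1 B.2.2).1⟩
      invFun t := ⟨properColoring t.1, t.2.1, (proper_iff _).2 ⟨t.2.2, rfl⟩⟩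
      left_inv B := Subtype.ext ((proper_iff B.1).1 B.2.2).2.symm
      right_inv _ := rfl }

end ColoredBinTree

namespace BinTree

theorem internals_eq_zero_iff {t : BinTree} : t.internals = 0 ↔ t = leaf := by
  cases t <;> simp [internals]

theorem finite_setOf_internals_eq (n : ℕ) : {t : BinTree | t.internals = n}.Finite := by
  induction n using Nat.strong_induction_on with
  | _ n ih =>
    rcases n with _ | n
    · exact (Set.finite_singleton leaf).subset fun t ht => internals_eq_zero_iff.1 ht
    refine (Set.Finite.biUnion (Finset.range (n + 1)).finite_toSet fun i hi =>
      ((ih i (by simpa using hi)).prod (ih (n - i) (by omega))).image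
        fun lr => node lr.1 lr.2).subset ?_
    rintro (_ | ⟨l, r⟩) ht
    · simp [internals] at ht
    · simp only [Set.mem_ofPred_eq, internals] at ht
      exact Set.mem_biUnion (x := l.internals) (Finset.mem_coe.2 (Finset.mem_range.2 (by omega)))
        ⟨(l, r), ⟨rfl, show r.internals = n - l.internals by omega⟩, rfl⟩

instance (n : ℕ) (P : BinTree → Prop) : Finite {t : BinTree // t.internals = n ∧ P t} :=
  ((finite_setOf_internals_eq n).subset fun _ h => h.1).to_subtype

theorem card_internals_zero (P : BinTree → Prop) [Decidable (P leaf)] :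
    Nat.card {t : BinTree // t.internals = 0 ∧ P t} = if P leaf then 1 else 0 := by
  split_ifs with hP
  · exact Nat.card_eq_one_iff_exists.2
      ⟨⟨leaf, rfl, hP⟩, fun t => Subtype.ext (internals_eq_zero_iff.1 t.2.1)⟩
  · have : IsEmpty {t : BinTree // t.internals = 0 ∧ P t} :=
      ⟨fun t => hP (internals_eq_zero_iff.1 t.2.1 ▸ t.2.2)⟩
    exact Nat.card_of_isEmpty

open Finset in
theorem card_internals_succ {P Q R : BinTree → Prop} (h : ∀ l r, P (node l r) ↔ Q l ∧ R r)
    (n : ℕ) :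
    Nat.card {t : BinTree // t.internals = n + 1 ∧ P t} =
      ∑ ij ∈ antidiagonal n, Nat.card {l : BinTree // l.internals = ij.1 ∧ Q l} *
        Nat.card {r : BinTree // r.internals = ij.2 ∧ R r} := by
  let f : (Σ ij : antidiagonal n, {l : BinTree // l.internals = ij.1.1 ∧ Q l} ×
      {r : BinTree // r.internals = ij.1.2 ∧ R r}) → {t : BinTree // t.internals = n + 1 ∧ P t} :=
    fun x => ⟨node x.2.1 x.2.2, by
      simp [internals, x.2.1.2.1, x.2.2.2.1, mem_antidiagonal.1 x.1.2],
      (h _ _).2 ⟨x.2.1.2.2, x.2.2.2.2⟩⟩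
  have hf : f.Bijective := by
    refine ⟨?_, ?_⟩
    · rintro ⟨⟨ij, _⟩, ⟨l, hl, _⟩, ⟨r, hr, _⟩⟩ ⟨⟨ij', _⟩, ⟨l', hl', _⟩, ⟨r', hr', _⟩⟩ he
      simp only [f, Subtype.mk.injEq, node.injEq] at he
      obtain ⟨rfl, rfl⟩ := he
      obtain rfl : ij = ij' := Prod.ext (hl.symm.trans hl') (hr.symm.trans hr')
      rfl
    · rintro ⟨_ | ⟨l, r⟩, ht, hP⟩
      · simp [internals] at ht
      · refine ⟨⟨⟨(l.internals, r.internals), ?_⟩, ⟨l, rfl, ((h l r).1 hP).1⟩,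
          ⟨r, rfl, ((h l r).1 hP).2⟩⟩, rfl⟩
        simpa [internals] using ht
  rw [← Nat.card_congr (Equiv.ofBijective f hf), Nat.card_sigma]
  simp only [Nat.card_prod]
  exact Finset.sum_coe_sort _ fun ij : ℕ × ℕ =>
    Nat.card {l : BinTree // l.internals = ij.1 ∧ Q l} *
      Nat.card {r : BinTree // r.internals = ij.2 ∧ R r}

open PowerSeries

noncomputable def genFun (P : BinTree → Prop) : ℚ⟦X⟧ :=
  mk fun n => Nat.card {t : BinTree // t.internals = n ∧ P t}

open Classical in
theorem genFun_eq {P Q R : BinTree → Prop} (h : ∀ l r, P (node l r) ↔ Q l ∧ R r) :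
    genFun P = (if P leaf then 1 else 0) + X * (genFun Q * genFun R) := by
  ext (_ | n)
  · simp [genFun, card_internals_zero]
  · rw [map_add, coeff_succ_X_mul]
    simp [genFun, card_internals_succ h, coeff_mul, apply_ite (coeff (n + 1))]

theorem genFun_isProperShape (s : ℕ) :
    genFun (IsProperShape s) = (if s % 4 ≤ 1 then 1 else 0) +
      X * (genFun (IsProperShape (s + 1)) * genFun (IsProperShape 0)) := by
  rw [genFun_eq fun _ _ => Iff.rfl]
  congr

theorem subst_genFun_isProperShape :
    subst (X * genFun (IsProperShape 0)) (X * ((1 - X) * (1 + X ^ 2)) : ℚ⟦X⟧) = X := by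
  set G := genFun (IsProperShape 0)
  set h : ℚ⟦X⟧ := X * G
  have hh : HasSubst h := .of_constantCoeff_zero' (by simp [h])
  have e0 := genFun_isProperShape 0
  have e1 := genFun_isProperShape 1
  have e2 := genFun_isProperShape 2
  have e3 := genFun_isProperShape 3
  rw [isProperShape_add_four 0] at e3
  norm_num at e0 e1 e2 e3
  -- the shape conditions give `G = 1 + h + h⁴ G`, i.e. `h - h⁵ = X (1 + h)`
  have key : (1 + h) * (h * ((1 - h) * (1 + h ^ 2)) - X) = 0 := by
    linear_combination X * e0 + (X * h) * e1 + (X * h ^ 2) * e2 + (X * h ^ 3) * e3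
  have hne : (1 + h : ℚ⟦X⟧) ≠ 0 := fun h0 => by simpa [h] using congrArg constantCoeff h0
  rw [← coe_substAlgHom hh]
  simpa [substAlgHom_X, sub_eq_zero] using (mul_eq_zero.1 key).resolve_left hne

theorem card_isProperShape (n : ℕ) :
    (n + 1 : ℚ) * Nat.card {t : BinTree // t.internals = n ∧ t.IsProperShape 0} =
      ∑ p ∈ Finset.range (n / 2 + 1),
        (-1) ^ p * ((n + p).choose p : ℚ) * ((2 * n - 2 * p).choose (n - 2 * p) : ℚ) := by
  have hG : (Nat.card {t : BinTree // t.internals = n ∧ t.IsProperShape 0} : ℚ) =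
      coeff (n + 1) (X * genFun (IsProperShape 0)) := by
    rw [coeff_succ_X_mul, genFun, coeff_mk]
  rw [hG, coeff_succ_of_subst_X_mul_eq_X (by simp) (by simp) subst_genFun_isProperShape n,
    coeff_inv_one_sub_X_mul_one_add_X_sq_pow]

end BinTree

/-- **Counting proper colored binary trees.** For every nonnegative integer `n`, the
number of proper colored binary trees with `n` internal vertices equals
`∑_{p=0}^{⌊n/2⌋} (-1)^p (1/(n+1)) C(n+p, p) C(2n-2p, n-2p)`. -/
theorem card_proper_colored_binary_trees (n : ℕ) :
    (Nat.card {B : ColoredBinTree // B.tree.internals = n ∧ B.Proper} : ℚ) =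
      ∑ p ∈ Finset.range (n / 2 + 1),
        (-1 : ℚ) ^ p * (1 / (n + 1)) * ((n + p).choose p) *
          ((2 * n - 2 * p).choose (n - 2 * p)) := by
  rw [ColoredBinTree.card_proper_eq]
  set c := Nat.card {t : BinTree // t.internals = n ∧ t.IsProperShape 0}
  calc (c : ℚ) = 1 / (n + 1) * ((n + 1) * c) := by field_simp
    _ = _ := by
      rw [BinTree.card_isProperShape, Finset.mul_sum]
      exact Finset.sum_congr rfl fun p _ => by ring
end
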